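/- arXiv:math/0105073 — 4 statements merged into one kernel-verified Lean document; each statement's English description precedes it below -/
import Mathlib

section
/- Let π ∈ S_n and let G̃ be any connected component of the bipartite graph G_π, with t₁ the number of vertices of G̃ lying in the class of positions V₁ and t₃ the number of vertices of G̃ lying in the class of occurrences V₃. Then t₁ ≤ 2t₃ + 1. -/
namespace Paper132

/-- `t = (i,j,k)` is an occurrence of the pattern 132 in `π`. -/
def IsOcc132 {n : ℕ} (π : Equiv.Perm (Fin n)) (t : Fin n × Fin n × Fin n) : Prop :=
  t.1 < t.2.1 ∧ t.2.1 < t.2.2 ∧ π t.1 < π t.2.2 ∧ π t.2.2 < π t.2.1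

/-- The number of occurrences of 132 in `π`. -/
noncomputable def occCount {n : ℕ} (π : Equiv.Perm (Fin n)) : ℕ :=
  Nat.card {t : Fin n × Fin n × Fin n // IsOcc132 π t}

/-- `ψ_r(n)`: the number of permutations of length `n` with exactly `r` occurrences of 132. -/
noncomputable def psi (r n : ℕ) : ℕ :=
  Nat.card {π : Equiv.Perm (Fin n) // occCount π = r}

/-- The type of occurrences of 132 in `π`. -/
def Occ132 {n : ℕ} (π : Equiv.Perm (Fin n)) : Type :=
  {t : Fin n × Fin n × Fin n // IsOcc132 π t}

/-- The bipartite graph `G_π` on positions and occurrences. -/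
def patternGraph {n : ℕ} (π : Equiv.Perm (Fin n)) :
    SimpleGraph (Fin n ⊕ Occ132 π) :=
  SimpleGraph.fromRel fun v w =>
    ∃ (i : Fin n) (o : Occ132 π),
      v = Sum.inl i ∧ w = Sum.inr o ∧
        (i = o.1.1 ∨ i = o.1.2.1 ∨ i = o.1.2.2)

/-- The position of the maximal entry. -/
def maxPos {n : ℕ} (π : Equiv.Perm (Fin (n + 1))) : Fin (n + 1) :=
  π.symm (Fin.last n)

/-- The set of kernel positions: positions in the connected component of `G_π`
containing the position of the maximal entry. -/
def kernelSet {n : ℕ} (π : Equiv.Perm (Fin (n + 1))) : Set (Fin (n + 1)) :=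
  {i | (patternGraph π).Reachable (Sum.inl i) (Sum.inl (maxPos π))}

noncomputable def kernelFinset {n : ℕ} (π : Equiv.Perm (Fin (n + 1))) : Finset (Fin (n + 1)) :=
  (kernelSet π).toFinite.toFinset

/-- The size of the kernel of `π`. -/
noncomputable def kernelSize {n : ℕ} (π : Equiv.Perm (Fin (n + 1))) : ℕ :=
  (kernelFinset π).card

/-- `kpos π hs k` is the kernel position `i_{k+1}` (0-indexed `k`). -/
noncomputable def kpos {n s : ℕ} (π : Equiv.Perm (Fin (n + 1)))
    (hs : (kernelFinset π).card = s) (k : Fin s) : Fin (n + 1) :=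
  ((kernelFinset π).orderIsoOfFin hs k).1

/-- `π` has kernel shape `ρ`: the kernel entries of `π`, read in increasing order of
positions, are order-isomorphic to `ρ`. -/
def ShapeCond {n s : ℕ} (π : Equiv.Perm (Fin (n + 1))) (ρ : Equiv.Perm (Fin s))
    (hs : (kernelFinset π).card = s) : Prop :=
  ∀ a b : Fin s, ρ a < ρ b ↔ π (kpos π hs a) < π (kpos π hs b)

/-- `π ∈ S(ρ)`: the kernel shape of `π` equals `ρ`. -/
def InShapeClass {n s : ℕ} (π : Equiv.Perm (Fin (n + 1))) (ρ : Equiv.Perm (Fin s)) : Prop :=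
  ∃ hs : (kernelFinset π).card = s, ShapeCond π ρ hs

/-- `ρ` is a kernel permutation: it is the kernel shape of some permutation. -/
def IsKernelPerm {s : ℕ} (ρ : Equiv.Perm (Fin s)) : Prop :=
  ∃ (n : ℕ) (π : Equiv.Perm (Fin (n + 1))), InShapeClass π ρ

/-- The cell `C_{m l}(π)` (with `m`, `l` 1-indexed, `1 ≤ m ≤ s`, `1 ≤ l ≤ s+1`,
as in the paper), as a set of entries (values) of `π`: it consists of those values `π j`
with `i_{l-1} < j < i_l` and `v_{m-1} < π j < v_m`, where `i_1 < … < i_s` are the kernel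
positions (`i_0`, `i_{s+1}` are sentinels imposing no restriction) and
`v_m = π(i_{ρ⁻¹(m)})` (`v_0` a sentinel imposing no restriction). -/
def cellSet {n s : ℕ} (π : Equiv.Perm (Fin (n + 1))) (ρ : Equiv.Perm (Fin s))
    (hs : (kernelFinset π).card = s) (m l : ℕ) : Set (Fin (n + 1)) :=
  {v | ∃ j : Fin (n + 1), π j = v ∧
    (∀ (h₁ : 2 ≤ l) (h₂ : l ≤ s + 1), kpos π hs ⟨l - 2, by omega⟩ < j) ∧
    (∀ (h₁ : 1 ≤ l) (h₂ : l ≤ s), j < kpos π hs ⟨l - 1, by omega⟩) ∧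
    (∀ (h₁ : 2 ≤ m) (h₂ : m ≤ s), π (kpos π hs (ρ.symm ⟨m - 2, by omega⟩)) < π j) ∧
    (∀ (h₁ : 1 ≤ m) (h₂ : m ≤ s), π j < π (kpos π hs (ρ.symm ⟨m - 1, by omega⟩)))}

/-- `(m, l)` is a feasible cell of the kernel permutation `ρ`:
`C_{m l}(π)` is nonempty for at least one `π ∈ S(ρ)`. -/
def Feasible {s : ℕ} (ρ : Equiv.Perm (Fin s)) (m l : ℕ) : Prop :=
  1 ≤ m ∧ m ≤ s ∧ 1 ≤ l ∧ l ≤ s + 1 ∧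
    ∃ (n : ℕ) (π : Equiv.Perm (Fin (n + 1))) (hs : (kernelFinset π).card = s),
      ShapeCond π ρ hs ∧ (cellSet π ρ hs m l).Nonempty

/-- `f(ρ)`: the number of feasible cells of `ρ`. -/
noncomputable def numFeasible {s : ℕ} (ρ : Equiv.Perm (Fin s)) : ℕ :=
  Nat.card {p : ℕ × ℕ // Feasible ρ p.1 p.2}

/-- `Ψ_r(x) = Σ_n ψ_r(n) xⁿ ∈ ℚ[[x]]`. -/
noncomputable def PsiGF (r : ℕ) : PowerSeries ℚ :=
  PowerSeries.mk fun n => (psi r n : ℚ)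


lemma exists_adj_dist_aux {V : Type*} {G : SimpleGraph V} {u b : V}
    (h : G.Reachable u b) (hne : u ≠ b) :
    ∃ x, G.Adj u x ∧ G.dist x b + 1 = G.dist u b := by
  obtain ⟨w, hw⟩ := h.exists_walk_length_eq_dist
  cases w with
  | nil => exact absurd rfl hne
  | @cons _ x _ h' q =>
    refine ⟨x, h', ?_⟩
    have h1 : G.dist x b ≤ q.length := SimpleGraph.dist_le q
    obtain ⟨q', hq'⟩ := q.reachable.exists_walk_length_eq_dist
    have h2 : G.dist u b ≤ (SimpleGraph.Walk.cons h' q').length := SimpleGraph.dist_le _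
    simp only [SimpleGraph.Walk.length_cons] at hw h2
    omega

lemma patternGraph_adj_cases {n : ℕ} {π : Equiv.Perm (Fin n)}
    {x y : Fin n ⊕ Occ132 π} (h : (patternGraph π).Adj x y) :
    (∃ (i : Fin n) (o : Occ132 π), x = Sum.inl i ∧ y = Sum.inr o ∧
        (i = o.1.1 ∨ i = o.1.2.1 ∨ i = o.1.2.2)) ∨
    (∃ (i : Fin n) (o : Occ132 π), x = Sum.inr o ∧ y = Sum.inl i ∧
        (i = o.1.1 ∨ i = o.1.2.1 ∨ i = o.1.2.2)) := by
  rw [patternGraph, SimpleGraph.fromRel_adj] at h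
  rcases h.2 with ⟨i, o, h1, h2, h3⟩ | ⟨i, o, h1, h2, h3⟩
  · exact Or.inl ⟨i, o, h1, h2, h3⟩
  · exact Or.inr ⟨i, o, h2, h1, h3⟩

lemma patternGraph_adj_of_mem {n : ℕ} {π : Equiv.Perm (Fin n)}
    {i : Fin n} {o : Occ132 π} (h : i = o.1.1 ∨ i = o.1.2.1 ∨ i = o.1.2.2) :
    (patternGraph π).Adj (Sum.inl i) (Sum.inr o) := by
  rw [patternGraph, SimpleGraph.fromRel_adj]
  exact ⟨by simp, Or.inl ⟨i, o, rfl, rfl, h⟩⟩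

/-- Lemma 1: for any connected component of `G_π` (the component of an arbitrary
vertex `v`), the number `t₁` of positions in the component and the number `t₃` of
occurrences in the component satisfy `t₁ ≤ 2t₃ + 1`. -/
theorem component_positions_le (n : ℕ) (π : Equiv.Perm (Fin n)) (v : Fin n ⊕ Occ132 π) :
    Nat.card {i : Fin n // (patternGraph π).Reachable (Sum.inl i) v} ≤
      2 * Nat.card {o : Occ132 π // (patternGraph π).Reachable (Sum.inr o) v} + 1 := by
  classical
  set G := patternGraph π with hG
  haveI : Finite (Occ132 π) := by unfold Occ132; infer_instance
  haveI : Fintype (Occ132 π) := Fintype.ofFinite _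
  -- choose a base position in the component
  obtain ⟨b, hb⟩ : ∃ b : Fin n, G.Reachable (Sum.inl b) v := by
    cases v with
    | inl i => exact ⟨i, SimpleGraph.Reachable.refl _⟩
    | inr o => exact ⟨o.1.1, (patternGraph_adj_of_mem (Or.inl rfl)).reachable⟩
  set P : Finset (Fin n) := Finset.univ.filter (fun i => G.Reachable (Sum.inl i) v) with hP
  set O : Finset (Occ132 π) := Finset.univ.filter (fun o => G.Reachable (Sum.inr o) v) with hO
  have e1 : Nat.card {i : Fin n // G.Reachable (Sum.inl i) v} = P.card := by
    rw [Nat.card_eq_fintype_card, hP, Fintype.card_subtype]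
  have e2 : Nat.card {o : Occ132 π // G.Reachable (Sum.inr o) v} = O.card := by
    rw [Nat.card_eq_fintype_card, hO, Fintype.card_subtype]
  rw [e1, e2]
  have hmemP : ∀ i : Fin n, i ∈ P ↔ G.Reachable (Sum.inl i) (Sum.inl b) := by
    intro i
    rw [hP, Finset.mem_filter]
    constructor
    · exact fun h => h.2.trans hb.symm
    · exact fun h => ⟨Finset.mem_univ i, h.trans hb⟩
  have hbP : b ∈ P := (hmemP b).mpr (SimpleGraph.Reachable.refl _)
  set d : (Fin n ⊕ Occ132 π) → ℕ := fun x => G.dist x (Sum.inl b) with hd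
  set Q : Fin n → Occ132 π → Prop :=
    fun p o => G.Adj (Sum.inl p) (Sum.inr o) ∧ d (Sum.inr o) + 1 = d (Sum.inl p) with hQdef
  set f : Fin n → Option (Occ132 π) :=
    fun p => if h : ∃ o, Q p o then some h.choose else none with hf
  set s : Finset (Fin n) := P.erase b with hs
  have hQs : ∀ p ∈ s, ∃ o, Q p o ∧ f p = some o := by
    intro p hp
    have hpne : p ≠ b := Finset.ne_of_mem_erase hp
    have hpr : G.Reachable (Sum.inl p) (Sum.inl b) :=
      (hmemP p).mp (Finset.mem_of_mem_erase hp)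
    obtain ⟨x, hadj, hdist⟩ := exists_adj_dist_aux hpr (by simpa using hpne)
    obtain ⟨o, hx⟩ : ∃ o : Occ132 π, x = Sum.inr o := by
      rcases patternGraph_adj_cases hadj with ⟨i, o, h1, h2, _⟩ | ⟨i, o, h1, _, _⟩
      · exact ⟨o, h2⟩
      · exact absurd h1 (by simp)
    subst hx
    have hQpo : Q p o := ⟨hadj, hdist⟩
    have hex : ∃ o, Q p o := ⟨o, hQpo⟩
    refine ⟨hex.choose, hex.choose_spec, ?_⟩
    rw [hf]
    simp [hex]
  -- each fiber of f on s has size at most 2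
  have hfiber : ∀ a ∈ s.image f, (s.filter (fun p => f p = a)).card ≤ 2 := by
    intro a ha
    obtain ⟨p₀, hp₀s, hp₀⟩ := Finset.mem_image.mp ha
    obtain ⟨o, hQp₀o, hfp₀⟩ := hQs p₀ hp₀s
    have ha' : a = some o := hp₀ ▸ hfp₀
    subst ha'
    -- all fiber members p satisfy Q p o
    have hfib : ∀ p ∈ s.filter (fun p => f p = some o), Q p o := by
      intro p hp
      rw [Finset.mem_filter] at hp
      obtain ⟨o', hQo', hfo'⟩ := hQs p hp.1
      have : some o' = some o := hfo' ▸ hp.2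
      exact Option.some_injective _ this ▸ hQo'
    -- o has a neighbor position strictly closer to the base
    have hor : G.Reachable (Sum.inr o) (Sum.inl b) :=
      (hQp₀o.1.symm.reachable).trans ((hmemP p₀).mp (Finset.mem_of_mem_erase hp₀s))
    obtain ⟨x, hadj, hdist⟩ := exists_adj_dist_aux hor (by simp)
    obtain ⟨q, hx, hqmem⟩ : ∃ q : Fin n, x = Sum.inl q ∧
        (q = o.1.1 ∨ q = o.1.2.1 ∨ q = o.1.2.2) := by
      rcases patternGraph_adj_cases hadj with ⟨i, o', h1, _, _⟩ | ⟨i, o', h1, h2, h3⟩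
      · exact absurd h1 (by simp)
      · have : o' = o := by simpa using h1.symm
        exact ⟨i, h2, this ▸ h3⟩
    subst hx
    have hsub : s.filter (fun p => f p = some o) ⊆
        ({o.1.1, o.1.2.1, o.1.2.2} : Finset (Fin n)).erase q := by
      intro p hp
      have hQp := hfib p hp
      refine Finset.mem_erase.mpr ⟨?_, ?_⟩
      · intro hpq
        have h1 := hQp.2
        rw [hpq] at h1
        have h2 : d (Sum.inl q) + 1 = d (Sum.inr o) := hdist
        omega
      · rcases patternGraph_adj_cases hQp.1 with ⟨i, o', h1, h2, h3⟩ | ⟨i, o', h1, _, _⟩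
        · have hi : i = p := by simpa using h1.symm
          have ho' : o' = o := by simpa using h2.symm
          subst hi; subst ho'
          simpa [Finset.mem_insert] using h3
        · exact absurd h1 (by simp)
    calc (s.filter (fun p => f p = some o)).card
        ≤ (({o.1.1, o.1.2.1, o.1.2.2} : Finset (Fin n)).erase q).card :=
          Finset.card_le_card hsub
      _ = ({o.1.1, o.1.2.1, o.1.2.2} : Finset (Fin n)).card - 1 :=
          Finset.card_erase_of_mem (by simpa [Finset.mem_insert] using hqmem)
      _ ≤ 2 := by
          have : ({o.1.1, o.1.2.1, o.1.2.2} : Finset (Fin n)).card ≤ 3 := by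
            apply le_trans (Finset.card_insert_le _ _)
            have : ({o.1.2.1, o.1.2.2} : Finset (Fin n)).card ≤ 2 := by
              apply le_trans (Finset.card_insert_le _ _)
              simp
            omega
          omega
  have hcard : s.card ≤ 2 * (s.image f).card := Finset.card_le_mul_card_image s 2 hfiber
  have himsub : s.image f ⊆ O.image some := by
    intro a ha
    obtain ⟨p, hps, hpa⟩ := Finset.mem_image.mp ha
    obtain ⟨o, hQo, hfo⟩ := hQs p hps
    refine Finset.mem_image.mpr ⟨o, ?_, hpa ▸ hfo ▸ rfl⟩
    rw [hO, Finset.mem_filter]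
    refine ⟨Finset.mem_univ o, ?_⟩
    have : G.Reachable (Sum.inr o) (Sum.inl b) :=
      (hQo.1.symm.reachable).trans ((hmemP p).mp (Finset.mem_of_mem_erase hps))
    exact this.trans hb
  have him : (s.image f).card ≤ O.card := by
    calc (s.image f).card ≤ (O.image some).card := Finset.card_le_card himsub
      _ = O.card := Finset.card_image_of_injective O (Option.some_injective _)
  have hPs : s.card = P.card - 1 := Finset.card_erase_of_mem hbP
  have hPpos : 1 ≤ P.card := Finset.card_pos.mpr ⟨b, hbP⟩
  omega

end Paper132
end

section
/- If π ∈ S_n (n ≥ 1) contains exactly r occurrences of the pattern 132, then the size of the kernel of π is at most 2r + 1. -/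
namespace Paper132

section Aux

instance {n : ℕ} (π : Equiv.Perm (Fin n)) : DecidablePred (IsOcc132 π) := fun t => by
  unfold IsOcc132; infer_instance

noncomputable instance {n : ℕ} (π : Equiv.Perm (Fin n)) : Fintype (Occ132 π) :=
  Subtype.fintype _

/-- The three positions of an occurrence. -/
def slot {n : ℕ} {π : Equiv.Perm (Fin n)} (o : Occ132 π) : Fin 3 → Fin n :=
  ![o.1.1, o.1.2.1, o.1.2.2]

lemma slot_injective {n : ℕ} {π : Equiv.Perm (Fin n)} (o : Occ132 π) :
    Function.Injective (slot o) := by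
  have h1 := o.2.1
  have h2 := o.2.2.1
  have h3 := h1.trans h2
  intro a b hab
  fin_cases a <;> fin_cases b <;> simp_all [slot]

lemma adj_inl_inr {n : ℕ} {π : Equiv.Perm (Fin n)} {i : Fin n} {o : Occ132 π}
    (h : ∃ k, slot o k = i) : (patternGraph π).Adj (Sum.inl i) (Sum.inr o) := by
  rw [patternGraph, SimpleGraph.fromRel_adj]
  refine ⟨by simp, Or.inl ⟨i, o, rfl, rfl, ?_⟩⟩
  obtain ⟨k, hk⟩ := h
  fin_cases k <;> simp [slot] at hk <;> tauto

lemma adj_inl_cases {n : ℕ} {π : Equiv.Perm (Fin n)} {i : Fin n}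
    {w : Fin n ⊕ Occ132 π} (h : (patternGraph π).Adj (Sum.inl i) w) :
    ∃ o : Occ132 π, w = Sum.inr o ∧ ∃ k, slot o k = i := by
  rw [patternGraph, SimpleGraph.fromRel_adj] at h
  obtain ⟨-, h | h⟩ := h <;> obtain ⟨i', o, h1, h2, h3⟩ := h
  · obtain rfl : i' = i := (Sum.inl.inj h1).symm
    refine ⟨o, h2, ?_⟩
    rcases h3 with h3 | h3 | h3
    exacts [⟨0, h3.symm⟩, ⟨1, h3.symm⟩, ⟨2, h3.symm⟩]
  · exact absurd h2 (by simp)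

lemma adj_inr_cases {n : ℕ} {π : Equiv.Perm (Fin n)} {o : Occ132 π}
    {w : Fin n ⊕ Occ132 π} (h : (patternGraph π).Adj (Sum.inr o) w) :
    ∃ i : Fin n, w = Sum.inl i ∧ ∃ k, slot o k = i := by
  rw [patternGraph, SimpleGraph.fromRel_adj] at h
  obtain ⟨-, h | h⟩ := h <;> obtain ⟨i', o', h1, h2, h3⟩ := h
  · exact absurd h1 (by simp)
  · obtain rfl : o' = o := (Sum.inr.inj h2).symm
    refine ⟨i', h1, ?_⟩
    rcases h3 with h3 | h3 | h3
    exacts [⟨0, h3.symm⟩, ⟨1, h3.symm⟩, ⟨2, h3.symm⟩]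

/-- From a vertex reachable to `t` and distinct from it, there is a step decreasing distance. -/
lemma exists_step {V : Type*} {G : SimpleGraph V} {v t : V}
    (h : G.Reachable v t) (hne : v ≠ t) :
    ∃ w, G.Adj v w ∧ G.dist w t + 1 = G.dist v t := by
  obtain ⟨p, hp⟩ := h.exists_walk_length_eq_dist
  cases p with
  | nil => exact absurd rfl hne
  | @cons _ w _ ha q =>
      refine ⟨w, ha, ?_⟩
      have h1 : G.dist w t ≤ q.length := SimpleGraph.dist_le q
      have h2 : G.dist v t ≤ G.dist w t + 1 := by
        obtain ⟨q', hq'⟩ := q.reachable.exists_walk_length_eq_dist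
        have := SimpleGraph.dist_le (SimpleGraph.Walk.cons ha q')
        simpa [hq', Nat.add_comm] using this
      simp only [SimpleGraph.Walk.length_cons] at hp
      omega

/-- Distance to the max-position vertex. -/
noncomputable def dmax {n : ℕ} (π : Equiv.Perm (Fin (n + 1))) (v : Fin (n + 1) ⊕ Occ132 π) : ℕ :=
  (patternGraph π).dist v (Sum.inl (maxPos π))

/-- A slot of `o` of minimal distance. -/
noncomputable def minSlot {n : ℕ} (π : Equiv.Perm (Fin (n + 1))) (o : Occ132 π) : Fin 3 :=
  (Finset.exists_min_image Finset.univ (fun k => dmax π (Sum.inl (slot o k)))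
    ⟨0, Finset.mem_univ 0⟩).choose

lemma minSlot_spec {n : ℕ} (π : Equiv.Perm (Fin (n + 1))) (o : Occ132 π) (k : Fin 3) :
    dmax π (Sum.inl (slot o (minSlot π o))) ≤ dmax π (Sum.inl (slot o k)) :=
  (Finset.exists_min_image Finset.univ (fun k => dmax π (Sum.inl (slot o k)))
    ⟨0, Finset.mem_univ 0⟩).choose_spec.2 k (Finset.mem_univ k)

lemma kernel_exists_rep {n : ℕ} (π : Equiv.Perm (Fin (n + 1))) (i : Fin (n + 1))
    (hi : i ∈ (kernelFinset π).erase (maxPos π)) :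
    ∃ p : Occ132 π × Fin 2, slot p.1 ((minSlot π p.1).succAbove p.2) = i := by
  rw [Finset.mem_erase, kernelFinset, Set.Finite.mem_toFinset] at hi
  obtain ⟨hne, hreach⟩ := hi
  have hne' : (Sum.inl i : Fin (n + 1) ⊕ Occ132 π) ≠ Sum.inl (maxPos π) := by
    simpa using hne
  -- step from i
  obtain ⟨w, hadj, hdw⟩ := exists_step hreach hne'
  obtain ⟨o, rfl, k, hk⟩ := adj_inl_cases hadj
  -- o is reachable to the target
  have hreach_o : (patternGraph π).Reachable (Sum.inr o) (Sum.inl (maxPos π)) :=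
    (hadj.symm.reachable).trans hreach
  have hne_o : (Sum.inr o : Fin (n + 1) ⊕ Occ132 π) ≠ Sum.inl (maxPos π) := by simp
  obtain ⟨w', hadj', hdw'⟩ := exists_step hreach_o hne_o
  obtain ⟨j, rfl, k', hk'⟩ := adj_inr_cases hadj'
  -- the minimal slot has distance < dist of o < dist of i = dist of slot k
  have hmin : dmax π (Sum.inl (slot o (minSlot π o))) ≤ dmax π (Sum.inl j) :=
    hk' ▸ minSlot_spec π o k'
  have hkne : k ≠ minSlot π o := by
    intro hkeq
    rw [hkeq] at hk
    rw [hk] at hmin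
    simp only [dmax] at hmin
    omega
  obtain ⟨y, hy⟩ := Fin.exists_succAbove_eq hkne
  exact ⟨(o, y), by rw [hy, hk]⟩

end Aux

/-- Theorem 1: if `π ∈ S_n` (`n ≥ 1`) contains exactly `r` occurrences of 132, then the
size of the kernel of `π` is at most `2r + 1`. -/
theorem kernelSize_le (n r : ℕ) (π : Equiv.Perm (Fin (n + 1))) (h : occCount π = r) :
    kernelSize π ≤ 2 * r + 1 := by
  classical
  have hmem : maxPos π ∈ kernelFinset π := by
    rw [kernelFinset, Set.Finite.mem_toFinset]
    exact SimpleGraph.Reachable.refl _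
  have hcard : kernelSize π = ((kernelFinset π).erase (maxPos π)).card + 1 := by
    rw [kernelSize, Finset.card_erase_of_mem hmem]
    have : 0 < (kernelFinset π).card := Finset.card_pos.mpr ⟨_, hmem⟩
    omega
  -- build an injection from the erased kernel into occurrences × Fin 2
  set s := (kernelFinset π).erase (maxPos π) with hs
  have hrep : ∀ x : {i // i ∈ s}, ∃ p : Occ132 π × Fin 2,
      slot p.1 ((minSlot π p.1).succAbove p.2) = x.1 :=
    fun x => kernel_exists_rep π x.1 x.2
  choose f hf using hrep
  have hinj : Function.Injective f := by
    intro a b hab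
    have : (a : Fin (n + 1)) = b := by
      rw [← hf a, ← hf b, hab]
    exact Subtype.ext this
  have hle : s.card ≤ Fintype.card (Occ132 π × Fin 2) := by
    rw [← Fintype.card_coe]
    exact Fintype.card_le_of_injective f hinj
  have hocc : Fintype.card (Occ132 π) = r := by
    rw [← h, occCount, Nat.card_eq_fintype_card]; rfl
  rw [Fintype.card_prod, hocc, Fintype.card_fin] at hle
  omega

end Paper132
end

section
/- Let ρ ∈ S_s be a kernel permutation and let π ∈ S(ρ) have kernel positions i₁ < … < i_s. Then for every k with 1 ≤ k ≤ s, every l with k < l ≤ s+1 and every m with ρ(k) < m ≤ s, the cell C_{ml}(π) is empty. -/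
namespace Paper132

/-- If `(x, y, z)` is an occurrence of 132, `u` is one of `x, y, z` and `w` is one of
`x, y, z` with `inl w` reachable from `inl (maxPos π)`, then `inl u` is reachable too. -/
lemma reach_of_occ {n : ℕ} (π : Equiv.Perm (Fin (n + 1))) {u w x y z : Fin (n + 1)}
    (h1 : x < y) (h2 : y < z) (h3 : π x < π z) (h4 : π z < π y)
    (hu : u = x ∨ u = y ∨ u = z) (hw : w = x ∨ w = y ∨ w = z)
    (hRw : (patternGraph π).Reachable (Sum.inl w) (Sum.inl (maxPos π))) :
    (patternGraph π).Reachable (Sum.inl u) (Sum.inl (maxPos π)) := by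
  let o : Occ132 π := ⟨(x, y, z), h1, h2, h3, h4⟩
  have hadj : ∀ q : Fin (n + 1), q = x ∨ q = y ∨ q = z →
      (patternGraph π).Adj (Sum.inl q) (Sum.inr o) := by
    intro q hq
    rw [patternGraph, SimpleGraph.fromRel_adj]
    exact ⟨by simp, Or.inl ⟨q, o, rfl, rfl, hq⟩⟩
  exact ((hadj u hu).reachable).trans (((hadj w hw).reachable).symm.trans hRw)

/-- Main combinatorial lemma: there is no kernel position `i` and non-kernel position `j`
with `i < j` and `π i < π j`. -/
lemma main_lemma {n : ℕ} (π : Equiv.Perm (Fin (n + 1))) (i j : Fin (n + 1))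
    (hRi : (patternGraph π).Reachable (Sum.inl i) (Sum.inl (maxPos π)))
    (hRj : ¬ (patternGraph π).Reachable (Sum.inl j) (Sum.inl (maxPos π)))
    (hij : i < j) (hvij : π i < π j) : False := by
  have key : ∀ (v e : Fin (n + 1) ⊕ Occ132 π), (patternGraph π).Walk v e →
      e = Sum.inl i →
      (∀ q, v = Sum.inl q → q < j ∧ π q < π j) ∧
      (∀ o : Occ132 π, v = Sum.inr o →
        (o.1.1 < j ∧ π o.1.1 < π j) ∧ (o.1.2.1 < j ∧ π o.1.2.1 < π j) ∧
        (o.1.2.2 < j ∧ π o.1.2.2 < π j)) := by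
    intro v e w
    induction w with
    | nil =>
      intro he
      subst he
      refine ⟨fun q hq => ?_, fun o ho => by simp at ho⟩
      obtain rfl := Sum.inl.inj hq
      exact ⟨hij, hvij⟩
    | cons hadj p ih' =>
      intro he
      have ih := ih' he
      have hrel := hadj
      rw [patternGraph, SimpleGraph.fromRel_adj] at hrel
      obtain ⟨-, hrel⟩ := hrel
      rcases hrel with ⟨q, o, hv1, hu1, hmem⟩ | ⟨q, o, hu1, hv1, hmem⟩
      · -- current vertex is `inl q`, next is `inr o`
        subst hv1; subst hu1
        refine ⟨fun q' hq' => ?_, fun o' ho' => by simp at ho'⟩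
        obtain rfl := Sum.inl.inj hq'
        have h3 := ih.2 o rfl
        rcases hmem with rfl | rfl | rfl
        · exact h3.1
        · exact h3.2.1
        · exact h3.2.2
      · -- current vertex is `inr o`, next is `inl q`
        subst hv1; subst hu1
        refine ⟨fun q' hq' => by simp at hq', fun o' ho' => ?_⟩
        obtain rfl := Sum.inr.inj ho'
        have hq := ih.1 q rfl
        have hRq : (patternGraph π).Reachable (Sum.inl q) (Sum.inl (maxPos π)) :=
          (he ▸ p.reachable).trans hRi
        obtain ⟨⟨x, y, z⟩, h1, h2, h3, h4⟩ := o
        have hmem' : q = x ∨ q = y ∨ q = z := hmem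
        have hRx := reach_of_occ π h1 h2 h3 h4 (Or.inl rfl) hmem' hRq
        have hRy := reach_of_occ π h1 h2 h3 h4 (Or.inr (Or.inl rfl)) hmem' hRq
        have hRz := reach_of_occ π h1 h2 h3 h4 (Or.inr (Or.inr rfl)) hmem' hRq
        have hyne : y ≠ j := fun e => hRj (e ▸ hRy)
        have hzne : z ≠ j := fun e => hRj (e ▸ hRz)
        have hπyne : π y ≠ π j := fun e => hyne (π.injective e)
        have hπzne : π z ≠ π j := fun e => hzne (π.injective e)
        show (x < j ∧ π x < π j) ∧ (y < j ∧ π y < π j) ∧ (z < j ∧ π z < π j)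
        rcases hmem' with he | he | he
        · -- q = x
          rw [he] at hq
          obtain ⟨hxj, hπx⟩ := hq
          have hzj : z < j := by
            rcases lt_trichotomy z j with h | h | h
            · exact h
            · exact absurd h hzne
            · exfalso
              rcases lt_trichotomy (π z) (π j) with hv' | hv' | hv'
              · exact hRj (reach_of_occ π hxj h h3 hv'
                  (Or.inr (Or.inl rfl)) (Or.inl rfl) hRx)
              · exact hπzne hv'
              · rcases lt_trichotomy y j with hy | hy | hy
                · exact hRj (reach_of_occ π h1 hy hπx (hv'.trans h4)
                    (Or.inr (Or.inr rfl)) (Or.inl rfl) hRx)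
                · exact hyne hy
                · exact hRj (reach_of_occ π hy h2 hv' h4
                    (Or.inl rfl) (Or.inr (Or.inl rfl)) hRy)
          have hyj : y < j := h2.trans hzj
          have hπy : π y < π j := by
            rcases lt_trichotomy (π y) (π j) with h | h | h
            · exact h
            · exact absurd h hπyne
            · exact absurd (reach_of_occ π h1 hyj hπx h
                (Or.inr (Or.inr rfl)) (Or.inl rfl) hRx) hRj
          exact ⟨⟨hxj, hπx⟩, ⟨hyj, hπy⟩, ⟨hzj, h4.trans hπy⟩⟩
        · -- q = y
          rw [he] at hq
          obtain ⟨hyj, hπy⟩ := hq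
          have hπz : π z < π j := h4.trans hπy
          have hπx : π x < π j := h3.trans hπz
          have hxj : x < j := h1.trans hyj
          have hzj : z < j := by
            rcases lt_trichotomy z j with h | h | h
            · exact h
            · exact absurd h hzne
            · exact absurd (reach_of_occ π hxj h h3 hπz
                (Or.inr (Or.inl rfl)) (Or.inl rfl) hRx) hRj
          exact ⟨⟨hxj, hπx⟩, ⟨hyj, hπy⟩, ⟨hzj, hπz⟩⟩
        · -- q = z
          rw [he] at hq
          obtain ⟨hzj, hπz⟩ := hq
          have hyj : y < j := h2.trans hzj
          have hxj : x < j := h1.trans hyj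
          have hπx : π x < π j := h3.trans hπz
          have hπy : π y < π j := by
            rcases lt_trichotomy (π y) (π j) with h | h | h
            · exact h
            · exact absurd h hπyne
            · exact absurd (reach_of_occ π h1 hyj hπx h
                (Or.inr (Or.inr rfl)) (Or.inl rfl) hRx) hRj
          exact ⟨⟨hxj, hπx⟩, ⟨hyj, hπy⟩, ⟨hzj, hπz⟩⟩
  obtain ⟨w⟩ := hRi.symm
  have hgood := (key (Sum.inl (maxPos π)) (Sum.inl i) w rfl).1 (maxPos π) rfl
  have hmax : π (maxPos π) = Fin.last n := π.apply_symm_apply (Fin.last n)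
  have hle : π j ≤ π (maxPos π) := by rw [hmax]; exact Fin.le_last _
  exact absurd hgood.2 (not_lt.mpr hle)

lemma kpos_lt_iff {n s : ℕ} (π : Equiv.Perm (Fin (n + 1))) (hs : (kernelFinset π).card = s)
    {x y : Fin s} : kpos π hs x < kpos π hs y ↔ x < y := by
  constructor
  · intro h
    exact ((kernelFinset π).orderIsoOfFin hs).lt_iff_lt.mp (Subtype.coe_lt_coe.mp h)
  · intro h
    exact Subtype.coe_lt_coe.mpr (((kernelFinset π).orderIsoOfFin hs).lt_iff_lt.mpr h)

lemma kpos_reachable {n s : ℕ} (π : Equiv.Perm (Fin (n + 1)))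
    (hs : (kernelFinset π).card = s) (x : Fin s) :
    (patternGraph π).Reachable (Sum.inl (kpos π hs x)) (Sum.inl (maxPos π)) := by
  have hmem : kpos π hs x ∈ kernelFinset π := ((kernelFinset π).orderIsoOfFin hs x).2
  rw [kernelFinset, Set.Finite.mem_toFinset] at hmem
  exact hmem

set_option maxHeartbeats 2000000

/-- Lemma 2: let `ρ ∈ S_s` be a kernel permutation and `π ∈ S(ρ)`. Then for every
`k` with `1 ≤ k ≤ s`, every `l` with `k < l ≤ s + 1`, and every `m` with
`ρ(k) < m ≤ s` (all 1-indexed), the cell `C_{m l}(π)` is empty. -/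
theorem cell_infeasible (s : ℕ) (ρ : Equiv.Perm (Fin s)) (hρ : IsKernelPerm ρ)
    (n : ℕ) (π : Equiv.Perm (Fin (n + 1))) (hs : (kernelFinset π).card = s)
    (hπ : ShapeCond π ρ hs)
    (k l m : ℕ) (hk1 : 1 ≤ k) (hks : k ≤ s)
    (hkl : k < l) (hls : l ≤ s + 1)
    (hmk : ((ρ ⟨k - 1, by omega⟩ : Fin s) : ℕ) + 1 < m) (hms : m ≤ s) :
    cellSet π ρ hs m l = ∅ := by
  apply Set.eq_empty_iff_forall_notMem.mpr
  intro v hv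
  obtain ⟨j, hπj, hA, hB, hC, hD⟩ := hv
  have hl2 : 2 ≤ l := by omega
  have hm2 : 2 ≤ m := by omega
  have hks' : k - 1 < s := by omega
  have hRik := kpos_reachable π hs ⟨k - 1, hks'⟩
  -- `j` is not a kernel position
  have hRj : ¬ (patternGraph π).Reachable (Sum.inl j) (Sum.inl (maxPos π)) := by
    intro hR
    have hjmem : j ∈ kernelFinset π := by
      rw [kernelFinset, Set.Finite.mem_toFinset]; exact hR
    obtain ⟨r, hr⟩ := ((kernelFinset π).orderIsoOfFin hs).surjective ⟨j, hjmem⟩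
    have hrj : kpos π hs r = j := congrArg Subtype.val hr
    have h1 : kpos π hs ⟨l - 2, by omega⟩ < kpos π hs r := by
      rw [hrj]; exact hA hl2 hls
    have h1' : l - 2 < (r : ℕ) := (kpos_lt_iff π hs).mp h1
    have hrs : (r : ℕ) < s := r.2
    by_cases hls' : l ≤ s
    · have h2 : kpos π hs r < kpos π hs ⟨l - 1, by omega⟩ := by
        rw [hrj]; exact hB (by omega) hls'
      have h2' : (r : ℕ) < l - 1 := (kpos_lt_iff π hs).mp h2
      omega
    · omega
  -- `i_k < j`
  have hikj : kpos π hs ⟨k - 1, hks'⟩ < j := by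
    have h1 : kpos π hs ⟨l - 2, by omega⟩ < j := hA hl2 hls
    have hle : kpos π hs ⟨k - 1, hks'⟩ ≤ kpos π hs ⟨l - 2, by omega⟩ := by
      rcases eq_or_lt_of_le (show (⟨k - 1, hks'⟩ : Fin s) ≤ (⟨l - 2, by omega⟩ : Fin s) from
          Fin.mk_le_mk.mpr (by omega)) with he | hlt
      · rw [he]
      · exact le_of_lt ((kpos_lt_iff π hs).mpr hlt)
    exact lt_of_le_of_lt hle h1
  -- `π i_k < π j`
  have hval : π (kpos π hs ⟨k - 1, hks'⟩) < π j := by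
    have hm2s : m - 2 < s := by omega
    have h4 : π (kpos π hs (ρ.symm ⟨m - 2, hm2s⟩)) < π j := hC hm2 hms
    have hρb : ρ (ρ.symm ⟨m - 2, hm2s⟩) = ⟨m - 2, hm2s⟩ := ρ.apply_symm_apply _
    have hmk' : ((ρ ⟨k - 1, hks'⟩ : Fin s) : ℕ) + 1 < m := hmk
    rcases eq_or_lt_of_le
        (show ((ρ ⟨k - 1, hks'⟩ : Fin s) : ℕ) ≤ m - 2 from by omega) with he | hlt
    · have h5 : ρ ⟨k - 1, hks'⟩ = ρ (ρ.symm ⟨m - 2, hm2s⟩) := by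
        rw [hρb]; exact Fin.ext he
      have h6 : (⟨k - 1, hks'⟩ : Fin s) = ρ.symm ⟨m - 2, hm2s⟩ := ρ.injective h5
      rw [h6]; exact h4
    · have hab : ρ ⟨k - 1, hks'⟩ < ρ (ρ.symm ⟨m - 2, hm2s⟩) := by
        rw [hρb]; exact hlt
      exact lt_trans ((hπ _ _).mp hab) h4
  exact (main_lemma π (kpos π hs ⟨k - 1, hks'⟩) j hRik hRj hikj hval).elim

end Paper132
end

section
/- Let ρ ∈ S_s be a kernel permutation, let π, π′ ∈ S(ρ), and let 1 ≤ m < m′ ≤ s and 1 ≤ l < l′ ≤ s+1. Then the cells C_{ml}(π) and C_{m′l′}(π′) are not both nonempty. (Equivalently, the partial order on feasible cells of ρ given by C_{ml} ≺ C_{m′l′} iff m ≥ m′ and l ≤ l′ is a linear order.) -/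
namespace Paper132

section AuxBasic

variable {n s : ℕ}

lemma kpos_lt_kpos (π : Equiv.Perm (Fin (n + 1))) (hs : (kernelFinset π).card = s)
    {a b : Fin s} (h : a < b) : kpos π hs a < kpos π hs b :=
  ((kernelFinset π).orderIsoOfFin hs).lt_iff_lt.mpr h

lemma kpos_le_kpos (π : Equiv.Perm (Fin (n + 1))) (hs : (kernelFinset π).card = s)
    {a b : Fin s} (h : a ≤ b) : kpos π hs a ≤ kpos π hs b :=
  ((kernelFinset π).orderIsoOfFin hs).le_iff_le.mpr h

lemma kpos_inj (π : Equiv.Perm (Fin (n + 1))) (hs : (kernelFinset π).card = s)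
    {a b : Fin s} (h : kpos π hs a = kpos π hs b) : a = b :=
  ((kernelFinset π).orderIsoOfFin hs).injective (Subtype.ext h)

lemma kpos_lt_reflect (π : Equiv.Perm (Fin (n + 1))) (hs : (kernelFinset π).card = s)
    {a b : Fin s} (h : kpos π hs a < kpos π hs b) : a < b :=
  ((kernelFinset π).orderIsoOfFin hs).lt_iff_lt.mp h

lemma kpos_mem (π : Equiv.Perm (Fin (n + 1))) (hs : (kernelFinset π).card = s)
    (a : Fin s) : kpos π hs a ∈ kernelFinset π :=
  ((kernelFinset π).orderIsoOfFin hs a).2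

lemma kpos_mem_kernelSet (π : Equiv.Perm (Fin (n + 1))) (hs : (kernelFinset π).card = s)
    (a : Fin s) : kpos π hs a ∈ kernelSet π :=
  (Set.Finite.mem_toFinset _).mp (kpos_mem π hs a)

lemma kpos_surj (π : Equiv.Perm (Fin (n + 1))) (hs : (kernelFinset π).card = s)
    {j : Fin (n + 1)} (hj : j ∈ kernelFinset π) : ∃ a : Fin s, kpos π hs a = j := by
  refine ⟨((kernelFinset π).orderIsoOfFin hs).symm ⟨j, hj⟩, ?_⟩
  simp [kpos]

/-- adjacency to an occurrence vertex -/
lemma adj_occ {π : Equiv.Perm (Fin n)} (o : Occ132 π) (i : Fin n)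
    (hi : i = o.1.1 ∨ i = o.1.2.1 ∨ i = o.1.2.2) :
    (patternGraph π).Adj (Sum.inl i) (Sum.inr o) := by
  rw [patternGraph, SimpleGraph.fromRel_adj]
  exact ⟨by simp, Or.inl ⟨i, o, rfl, rfl, hi⟩⟩

lemma occ_reachable {π : Equiv.Perm (Fin n)} (o : Occ132 π) (i i' : Fin n)
    (hi : i = o.1.1 ∨ i = o.1.2.1 ∨ i = o.1.2.2)
    (hi' : i' = o.1.1 ∨ i' = o.1.2.1 ∨ i' = o.1.2.2) :
    (patternGraph π).Reachable (Sum.inl i) (Sum.inl i') :=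
  (adj_occ o i hi).reachable.trans (adj_occ o i' hi').reachable.symm

/-- if one position of an occurrence is in the kernel, so are all others -/
lemma kernel_closed {π : Equiv.Perm (Fin (n + 1))} (o : Occ132 π) (i i' : Fin (n + 1))
    (hi : i = o.1.1 ∨ i = o.1.2.1 ∨ i = o.1.2.2)
    (hi' : i' = o.1.1 ∨ i' = o.1.2.1 ∨ i' = o.1.2.2)
    (h : i ∈ kernelSet π) : i' ∈ kernelSet π :=
  (occ_reachable o i' i hi' hi).trans h

end AuxBasic

section AuxCell

variable {n s : ℕ}

lemma cell_extract (π : Equiv.Perm (Fin (n + 1))) (ρ : Equiv.Perm (Fin s))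
    (hs : (kernelFinset π).card = s) (hπ : ShapeCond π ρ hs)
    (m l : ℕ) (hm1 : 1 ≤ m) (hms : m ≤ s) (hl1 : 1 ≤ l) (hls : l ≤ s + 1)
    (hne : (cellSet π ρ hs m l).Nonempty) :
    ∃ j : Fin (n + 1), j ∉ kernelSet π ∧
      (∀ t : Fin s, (l - 1 ≤ (t : ℕ) → j < kpos π hs t) ∧ ((t : ℕ) < l - 1 → kpos π hs t < j)) ∧
      (∀ t : Fin s, (m - 1 ≤ (ρ t : ℕ) → π j < π (kpos π hs t)) ∧
        ((ρ t : ℕ) < m - 1 → π (kpos π hs t) < π j)) := by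
  obtain ⟨v, j, -, h1, h2, h3, h4⟩ := hne
  have hpos : ∀ t : Fin s,
      (l - 1 ≤ (t : ℕ) → j < kpos π hs t) ∧ ((t : ℕ) < l - 1 → kpos π hs t < j) := by
    intro t
    constructor
    · intro ht
      have hls' : l ≤ s := by omega
      have hbase := h2 hl1 hls'
      have : kpos π hs ⟨l - 1, by omega⟩ ≤ kpos π hs t :=
        kpos_le_kpos π hs (by simpa [Fin.le_def] using ht)
      exact lt_of_lt_of_le hbase this
    · intro ht
      have hl2 : 2 ≤ l := by omega
      have hbase := h1 hl2 hls
      have : kpos π hs t ≤ kpos π hs ⟨l - 2, by omega⟩ :=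
        kpos_le_kpos π hs (by simp [Fin.le_def]; omega)
      exact lt_of_le_of_lt this hbase
  have hval : ∀ t : Fin s, (m - 1 ≤ (ρ t : ℕ) → π j < π (kpos π hs t)) ∧
      ((ρ t : ℕ) < m - 1 → π (kpos π hs t) < π j) := by
    intro t
    constructor
    · intro ht
      have hbase := h4 hm1 hms
      rcases eq_or_lt_of_le (show (⟨m - 1, by omega⟩ : Fin s) ≤ ρ t from ht) with heq | hlt
      · have : t = ρ.symm ⟨m - 1, by omega⟩ := by
          apply ρ.injective; rw [Equiv.apply_symm_apply]; exact heq.symm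
        rw [this]; exact hbase
      · refine lt_trans hbase ?_
        refine (hπ (ρ.symm ⟨m - 1, by omega⟩) t).mp ?_
        rwa [Equiv.apply_symm_apply]
    · intro ht
      have hm2 : 2 ≤ m := by omega
      have hbase := h3 hm2 hms
      rcases eq_or_lt_of_le (show ρ t ≤ (⟨m - 2, by omega⟩ : Fin s) from by
          simp [Fin.le_def]; omega) with heq | hlt
      · have : t = ρ.symm ⟨m - 2, by omega⟩ := by
          apply ρ.injective; rw [Equiv.apply_symm_apply]; exact heq
        rw [this]; exact hbase
      · refine lt_trans ?_ hbase
        refine (hπ t (ρ.symm ⟨m - 2, by omega⟩)).mp ?_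
        rwa [Equiv.apply_symm_apply]
  refine ⟨j, ?_, hpos, hval⟩
  intro hj
  obtain ⟨t, rfl⟩ := kpos_surj π hs ((Set.Finite.mem_toFinset _).mpr hj)
  rcases lt_or_ge ((t : ℕ)) (l - 1) with h | h
  · exact lt_irrefl _ ((hpos t).2 h)
  · exact lt_irrefl _ ((hpos t).1 h)

lemma cell_conds (π : Equiv.Perm (Fin (n + 1))) (ρ : Equiv.Perm (Fin s))
    (hs : (kernelFinset π).card = s) (hπ : ShapeCond π ρ hs)
    (m l : ℕ) (hm1 : 1 ≤ m) (hms : m ≤ s) (hl1 : 1 ≤ l) (hls : l ≤ s + 1)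
    (hne : (cellSet π ρ hs m l).Nonempty) :
    (∀ t u : Fin s, l - 1 ≤ (t : ℕ) → t < u → m - 1 ≤ (ρ u : ℕ) → ρ u < ρ t → False) ∧
    (∀ t u : Fin s, (t : ℕ) < l - 1 → l - 1 ≤ (u : ℕ) → ρ t < ρ u → (ρ u : ℕ) < m - 1 → False) ∧
    (∀ t u : Fin s, t < u → (u : ℕ) < l - 1 → (ρ t : ℕ) < m - 1 → m - 1 ≤ (ρ u : ℕ) → False) := by
  obtain ⟨j, hjk, hpos, hval⟩ := cell_extract π ρ hs hπ m l hm1 hms hl1 hls hne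
  refine ⟨?_, ?_, ?_⟩
  · intro t u ht htu hu hvu
    exact hjk (kernel_closed (π := π) ⟨(j, kpos π hs t, kpos π hs u),
        (hpos t).1 ht, kpos_lt_kpos π hs htu, (hval u).1 hu, (hπ u t).mp hvu⟩
      (kpos π hs t) j (Or.inr (Or.inl rfl)) (Or.inl rfl) (kpos_mem_kernelSet π hs t))
  · intro t u ht hu hv hvu
    exact hjk (kernel_closed (π := π) ⟨(kpos π hs t, j, kpos π hs u),
        (hpos t).2 ht, (hpos u).1 hu, (hπ t u).mp hv, (hval u).2 hvu⟩
      (kpos π hs u) j (Or.inr (Or.inr rfl)) (Or.inr (Or.inl rfl)) (kpos_mem_kernelSet π hs u))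
  · intro t u htu hu hvt hvu
    have httl : (t : ℕ) < l - 1 := lt_trans htu hu
    exact hjk (kernel_closed (π := π) ⟨(kpos π hs t, kpos π hs u, j),
        kpos_lt_kpos π hs htu, (hpos u).2 hu, (hval t).2 hvt, (hval u).1 hvu⟩
      (kpos π hs t) j (Or.inl rfl) (Or.inr (Or.inr rfl)) (kpos_mem_kernelSet π hs t))

end AuxCell

section AuxConn

variable {n s : ℕ}

/-- Two indices share an occurrence of 132 in `ρ`. -/
def Rocc {s : ℕ} (ρ : Equiv.Perm (Fin s)) (a b : Fin s) : Prop :=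
  ∃ t u w : Fin s, t < u ∧ u < w ∧ ρ t < ρ w ∧ ρ w < ρ u ∧
    (a = t ∨ a = u ∨ a = w) ∧ (b = t ∨ b = u ∨ b = w)

/-- Two positions share an occurrence of 132 in `π`. -/
def RoccP {n : ℕ} (π : Equiv.Perm (Fin n)) (i i' : Fin n) : Prop :=
  ∃ o : Occ132 π, (i = o.1.1 ∨ i = o.1.2.1 ∨ i = o.1.2.2) ∧
    (i' = o.1.1 ∨ i' = o.1.2.1 ∨ i' = o.1.2.2)

lemma reachable_roccP (π : Equiv.Perm (Fin n)) (i i' : Fin n)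
    (h : (patternGraph π).Reachable (Sum.inl i) (Sum.inl i')) :
    Relation.ReflTransGen (RoccP π) i i' := by
  let f : Fin n ⊕ Occ132 π → Fin n := Sum.elim id (fun o => o.1.1)
  have step : ∀ v w, (patternGraph π).Adj v w →
      Relation.ReflTransGen (RoccP π) (f v) (f w) := by
    intro v w hvw
    rw [patternGraph, SimpleGraph.fromRel_adj] at hvw
    rcases hvw.2 with ⟨i₀, o, rfl, rfl, hmem⟩ | ⟨i₀, o, rfl, rfl, hmem⟩
    · exact Relation.ReflTransGen.single ⟨o, hmem, Or.inl rfl⟩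
    · exact Relation.ReflTransGen.single ⟨o, Or.inl rfl, hmem⟩
  have walk : ∀ (v w : Fin n ⊕ Occ132 π), (patternGraph π).Walk v w →
      Relation.ReflTransGen (RoccP π) (f v) (f w) := by
    intro v w p
    induction p with
    | nil => exact Relation.ReflTransGen.refl
    | cons h p ih => exact (step _ _ h).trans ih
  exact h.elim fun p => walk _ _ p

lemma kernel_conn (ρ : Equiv.Perm (Fin s)) (hρ : IsKernelPerm ρ) :
    ∀ a b : Fin s, Relation.ReflTransGen (Rocc ρ) a b := by
  obtain ⟨n, π, hs, hπ⟩ := hρ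
  -- lifting a ReflTransGen chain of RoccP starting at a kernel position
  have lift : ∀ i i' : Fin (n + 1), Relation.ReflTransGen (RoccP π) i i' →
      ∀ a : Fin s, kpos π hs a = i →
        ∃ b : Fin s, kpos π hs b = i' ∧ Relation.ReflTransGen (Rocc ρ) a b := by
    intro i i' h
    induction h with
    | refl => exact fun a ha => ⟨a, ha, Relation.ReflTransGen.refl⟩
    | @tail y z hyz hstep ih =>
      intro a ha
      obtain ⟨b, hb, hab⟩ := ih a ha
      obtain ⟨o, hy, hz⟩ := hstep
      have hyk : y ∈ kernelSet π := hb ▸ kpos_mem_kernelSet π hs b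
      have hmem : ∀ i₀ : Fin (n + 1), (i₀ = o.1.1 ∨ i₀ = o.1.2.1 ∨ i₀ = o.1.2.2) →
          ∃ c : Fin s, kpos π hs c = i₀ :=
        fun i₀ hi₀ => kpos_surj π hs ((Set.Finite.mem_toFinset _).mpr
          (kernel_closed o y i₀ hy hi₀ hyk))
      obtain ⟨c₁, hc₁⟩ := hmem o.1.1 (Or.inl rfl)
      obtain ⟨c₂, hc₂⟩ := hmem o.1.2.1 (Or.inr (Or.inl rfl))
      obtain ⟨c₃, hc₃⟩ := hmem o.1.2.2 (Or.inr (Or.inr rfl))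
      obtain ⟨h1, h2, h3, h4⟩ := o.2
      have hc12 : c₁ < c₂ := kpos_lt_reflect π hs (by rw [hc₁, hc₂]; exact h1)
      have hc23 : c₂ < c₃ := kpos_lt_reflect π hs (by rw [hc₂, hc₃]; exact h2)
      have hv13 : ρ c₁ < ρ c₃ := (hπ c₁ c₃).mpr (by rw [hc₁, hc₃]; exact h3)
      have hv32 : ρ c₃ < ρ c₂ := (hπ c₃ c₂).mpr (by rw [hc₃, hc₂]; exact h4)
      have hbmem : b = c₁ ∨ b = c₂ ∨ b = c₃ := by
        rcases hy with h | h | h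
        · exact Or.inl (kpos_inj π hs (by rw [hb, hc₁, h]))
        · exact Or.inr (Or.inl (kpos_inj π hs (by rw [hb, hc₂, h])))
        · exact Or.inr (Or.inr (kpos_inj π hs (by rw [hb, hc₃, h])))
      have hzc : ∃ c : Fin s, kpos π hs c = z ∧ (c = c₁ ∨ c = c₂ ∨ c = c₃) := by
        rcases hz with h | h | h
        · exact ⟨c₁, by rw [hc₁, h], Or.inl rfl⟩
        · exact ⟨c₂, by rw [hc₂, h], Or.inr (Or.inl rfl)⟩
        · exact ⟨c₃, by rw [hc₃, h], Or.inr (Or.inr rfl)⟩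
      obtain ⟨c, hcz, hcmem⟩ := hzc
      exact ⟨c, hcz, hab.tail ⟨c₁, c₂, c₃, hc12, hc23, hv13, hv32, hbmem, hcmem⟩⟩
  intro a b
  have ha := kpos_mem_kernelSet π hs a
  have hb := kpos_mem_kernelSet π hs b
  have hreach : (patternGraph π).Reachable (Sum.inl (kpos π hs a)) (Sum.inl (kpos π hs b)) :=
    SimpleGraph.Reachable.trans ha hb.symm
  obtain ⟨b', hb', hab⟩ := lift _ _ (reachable_roccP π _ _ hreach) a rfl
  rwa [kpos_inj π hs hb'] at hab

end AuxConn

/-- Lemma 3: let `ρ ∈ S_s` be a kernel permutation, `π, π' ∈ S(ρ)`, and let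
`1 ≤ m < m' ≤ s`, `1 ≤ l < l' ≤ s + 1`. Then the cells `C_{m l}(π)` and
`C_{m' l'}(π')` are not both nonempty; equivalently, the partial order `≺` on the
feasible cells of `ρ` is a linear order. -/
theorem cells_not_both_nonempty (s : ℕ) (ρ : Equiv.Perm (Fin s)) (hρ : IsKernelPerm ρ)
    (n n' : ℕ) (π : Equiv.Perm (Fin (n + 1))) (π' : Equiv.Perm (Fin (n' + 1)))
    (hs : (kernelFinset π).card = s) (hs' : (kernelFinset π').card = s)
    (hπ : ShapeCond π ρ hs) (hπ' : ShapeCond π' ρ hs')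
    (m m' l l' : ℕ) (hm1 : 1 ≤ m) (hmm : m < m') (hm's : m' ≤ s)
    (hl1 : 1 ≤ l) (hll : l < l') (hl's : l' ≤ s + 1) :
    ¬ ((cellSet π ρ hs m l).Nonempty ∧ (cellSet π' ρ hs' m' l').Nonempty) := by
  rintro ⟨hne, hne'⟩
  obtain ⟨A, B, C⟩ := cell_conds π ρ hs hπ m l hm1 (by omega) hl1 (by omega) hne
  obtain ⟨A', B', C'⟩ := cell_conds π' ρ hs' hπ' m' l' (by omega) hm's (by omega) hl's hne'
  have hs2 : 2 ≤ s := by omega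
  -- the "lower-left" set of indices
  set T : Fin s → Prop := fun p => (p : ℕ) < l' - 1 ∧ (ρ p : ℕ) < m' - 1 with hT
  -- T is closed under sharing an occurrence of 132 in ρ
  have hclose : ∀ t u w : Fin s, t < u → u < w → ρ t < ρ w → ρ w < ρ u →
      (T t ∨ T u ∨ T w) → T t ∧ T u ∧ T w := by
    intro t u w htu huw hv1 hv2 hT0
    have htu' : (t : ℕ) < (u : ℕ) := htu
    have huw' : (u : ℕ) < (w : ℕ) := huw
    have hv1' : (ρ t : ℕ) < (ρ w : ℕ) := hv1
    have hv2' : (ρ w : ℕ) < (ρ u : ℕ) := hv2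
    by_cases hTu : T u
    · refine ⟨⟨by omega, by omega⟩, hTu, ?_⟩
      by_contra hTw
      have hwl : l' - 1 ≤ (w : ℕ) := by
        rcases not_and_or.mp hTw with h | h
        · omega
        · omega
      exact B' t w (by omega) hwl hv1 (by omega)
    · exfalso
      rcases hT0 with hTt | hTu' | hTw
      · rcases lt_or_ge ((u : ℕ)) (l' - 1) with hu | hu
        · have hum : m' - 1 ≤ (ρ u : ℕ) := by
            rcases not_and_or.mp hTu with h | h
            · omega
            · omega
          exact C' t u htu hu (by omega) hum
        · rcases lt_or_ge ((ρ w : ℕ)) (m' - 1) with hw | hw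
          · exact B' t w (by omega) (by omega) hv1 hw
          · exact A' u w hu huw hw hv2
      · exact hTu hTu'
      · have hu : (u : ℕ) < l' - 1 := by omega
        have hum : m' - 1 ≤ (ρ u : ℕ) := by
          rcases not_and_or.mp hTu with h | h
          · omega
          · omega
        exact C' t u htu hu (by omega) hum
  -- T is nonempty
  have hbex : ∃ b : Fin s, T b := by
    by_contra h
    push_neg at h
    have hmem : ∀ p : Fin s, (p : ℕ) < l' - 1 → m' - 1 ≤ (ρ p : ℕ) := by
      intro p hp
      rcases not_and_or.mp (h p) with h' | h'
      · omega
      · omega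
    set q : Fin s := ρ.symm ⟨m' - 2, by omega⟩ with hqdef
    have hρq : (ρ q : ℕ) = m' - 2 := by rw [hqdef, Equiv.apply_symm_apply]
    have hq : l' - 1 ≤ (q : ℕ) := by
      by_contra hq'
      have := hmem q (by omega)
      omega
    set p : Fin s := ⟨l' - 2, by omega⟩ with hpdef
    have hρp : m' - 1 ≤ (ρ p : ℕ) := hmem p (by simp [hpdef]; omega)
    have hpq : p < q := by
      rw [Fin.lt_def]
      simp only [hpdef]
      omega
    exact A p q (by simp [hpdef]; omega) hpq (by omega)
      (by rw [Fin.lt_def]; omega)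
  obtain ⟨b, hb⟩ := hbex
  -- the position of the maximal value is not in T
  set a : Fin s := ρ.symm ⟨s - 1, by omega⟩ with hadef
  have hρa : (ρ a : ℕ) = s - 1 := by rw [hadef, Equiv.apply_symm_apply]
  have hTa : ¬ T a := by
    intro h
    have := h.2
    omega
  -- but T is closed under reachability in the occurrence graph, contradiction
  have hclosed : ∀ c : Fin s, Relation.ReflTransGen (Rocc ρ) b c → T c := by
    intro c h
    induction h with
    | refl => exact hb
    | @tail y z _ hstep ih =>
      obtain ⟨t, u, w, htu, huw, hv1, hv2, hy, hz⟩ := hstep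
      have hall := hclose t u w htu huw hv1 hv2
        (by rcases hy with rfl | rfl | rfl
            exacts [Or.inl ih, Or.inr (Or.inl ih), Or.inr (Or.inr ih)])
      rcases hz with rfl | rfl | rfl
      · exact hall.1
      · exact hall.2.1
      · exact hall.2.2
  exact hTa (hclosed a (kernel_conn ρ hρ b a))

end Paper132
end
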